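/- Let G be a simple connected graph on vertex set V = {1,...,n} with at least one pair of distinct nonadjacent vertices, and let λ and μ be real numbers such that every pair of adjacent vertices of G has at least λ common neighbors and every pair of distinct nonadjacent vertices of G has at least μ common neighbors. Then the Laplacian spread satisfies 𝒮_L(G) ≤ max_i { ( 2d_i − λ + μ + sqrt( 4 d_i m_i − 4(λ−μ)d_i + (λ−μ)² − 4μn ) ) / 2 } − min_i { ( 2d_i − λ + μ − sqrt( 4 d_i m_i − 4(λ−μ)d_i + (λ−μ)² − 4μn ) ) / 2 }, where the maximum and minimum are taken over those vertices i for which the expression under the square root is nonnegative. -/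

import Mathlib

/-!
If `L x = ℓ x` with `∑ xᵢ = 0`, then `A x = (D - ℓ) x`, so for `C = A² - (λ - μ) A - μ J` both
`xᵀ C x` and the row sums of `C` are explicit in `dᵢ`, `dᵢ mᵢ` and `ℓ`. Off the diagonal `C` is
entrywise nonnegative by the choice of `λ` and `μ`, hence
`0 ≤ ∑ᵢⱼ Cᵢⱼ (xᵢ - xⱼ)² = -2 ∑ᵢ fᵢ(ℓ) xᵢ²` with `fᵢ(ℓ) = ℓ² - (2dᵢ - λ + μ) ℓ + dᵢ² - dᵢ mᵢ + μ n`.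
So `fᵢ(ℓ) ≤ 0` for some `i`, which puts `ℓ` between the two roots of `fᵢ`. This applies to
`ℓ_{n-1}` and to `ℓ₁`: an eigenvector of `ℓ₁` whose entries do not sum to zero forces `ℓ₁ = 0`,
and then `ℓ₁ = ℓ_{n-1}`.
-/

open Finset Matrix

section

variable {ι : Type*} [Fintype ι]

theorem Matrix.IsSymm.sum_mul_sub_sq {C : Matrix ι ι ℝ} (hC : C.IsSymm) (x : ι → ℝ) :
    ∑ i, ∑ j, C i j * (x i - x j) ^ 2 = 2 * (∑ i, (C *ᵥ 1) i * x i ^ 2 - x ⬝ᵥ C *ᵥ x) := by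
  have hswap : ∑ i, ∑ j, C i j * x j ^ 2 = ∑ i, ∑ j, C i j * x i ^ 2 := by
    rw [Finset.sum_comm]
    simp_rw [hC.apply]
  have hexp : ∀ i j, C i j * (x i - x j) ^ 2
      = C i j * x i ^ 2 + C i j * x j ^ 2 - 2 * (x i * (C i j * x j)) := fun i j => by ring
  simp only [hexp, sum_add_distrib, sum_sub_distrib, ← mul_sum, hswap, mulVec, dotProduct,
    Pi.one_apply, mul_one, sum_mul]
  ring

theorem Matrix.PosSemidef.nonneg_of_mulVec_eq_smul {A : Matrix ι ι ℝ} (hA : A.PosSemidef)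
    {ℓ : ℝ} {x : ι → ℝ} (hx : x ≠ 0) (h : A *ᵥ x = ℓ • x) : 0 ≤ ℓ := by
  have hquad := hA.dotProduct_mulVec_nonneg x
  rw [h, dotProduct_smul, smul_eq_mul] at hquad
  exact nonneg_of_mul_nonneg_left hquad (dotProduct_star_self_pos_iff.mpr hx)

theorem exists_nonpos_of_sum_mul_sq_nonpos {f x : ι → ℝ} (hx : x ≠ 0)
    (h : ∑ i, f i * x i ^ 2 ≤ 0) : ∃ i, f i ≤ 0 := by
  by_contra! hf
  obtain ⟨i, hi⟩ := Function.ne_iff.mp hx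
  have hpos : 0 < ∑ i, f i * x i ^ 2 :=
    sum_pos' (fun j _ => mul_nonneg (hf j).le (sq_nonneg _))
      ⟨i, mem_univ i, mul_pos (hf i) (pow_two_pos_of_ne_zero hi)⟩
  linarith

end

theorem discrim_nonneg_and_mem_Icc_of_sq_sub_mul_add_nonpos {b c ℓ : ℝ}
    (h : ℓ ^ 2 - b * ℓ + c ≤ 0) :
    0 ≤ b ^ 2 - 4 * c ∧ ℓ ∈ Set.Icc ((b - √(b ^ 2 - 4 * c)) / 2) ((b + √(b ^ 2 - 4 * c)) / 2) := by
  have hsq : (2 * ℓ - b) ^ 2 ≤ b ^ 2 - 4 * c := by nlinarith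
  obtain ⟨hlo, hhi⟩ := abs_le.mp (Real.abs_le_sqrt hsq)
  exact ⟨(sq_nonneg _).trans hsq, by linarith, by linarith⟩

namespace SimpleGraph

variable {V : Type*} [Fintype V] (G : SimpleGraph V) [DecidableRel G.Adj]

theorem adjMatrix_mul_self_apply [DecidableEq V] {α : Type*} [NonAssocSemiring α] (i j : V) :
    (G.adjMatrix α * G.adjMatrix α) i j = #(G.neighborFinset i ∩ G.neighborFinset j) := by
  rw [adjMatrix_mul_apply]
  simp only [adjMatrix_apply, sum_boole]
  congr 2
  ext u
  simp [adj_comm]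

theorem sum_lapMatrix_mulVec [DecidableEq V] (x : V → ℝ) : ∑ i, (G.lapMatrix ℝ *ᵥ x) i = 0 := by
  rw [← one_dotProduct, dotProduct_mulVec, ← (G.isSymm_lapMatrix (R := ℝ)).eq, vecMul_transpose]
  exact (congrArg (· ⬝ᵥ x) G.lapMatrix_mulVec_const_eq_zero).trans (zero_dotProduct x)

theorem eq_zero_or_sum_eq_zero_of_lapMatrix_mulVec_eq_smul [DecidableEq V] {ℓ : ℝ} {x : V → ℝ}
    (h : G.lapMatrix ℝ *ᵥ x = ℓ • x) : ℓ = 0 ∨ ∑ i, x i = 0 := by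
  have hsum := G.sum_lapMatrix_mulVec x
  rw [h] at hsum
  simpa only [Pi.smul_apply, smul_eq_mul, ← mul_sum, mul_eq_zero] using hsum

/-- `A² - (λ - μ) A - μ J`: off the diagonal, the number of common neighbours of `i` and `j`
minus `λ` if they are adjacent and minus `μ` if not. -/
def commonNeighborExcess (lam mu : ℝ) : Matrix V V ℝ :=
  G.adjMatrix ℝ * G.adjMatrix ℝ - (lam - mu) • G.adjMatrix ℝ - mu • of fun _ _ => 1

theorem commonNeighborExcess_apply [DecidableEq V] (lam mu : ℝ) (i j : V) :
    G.commonNeighborExcess lam mu i j = #(G.neighborFinset i ∩ G.neighborFinset j)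
      - (lam - mu) * (if G.Adj i j then 1 else 0) - mu := by
  simp only [commonNeighborExcess, Matrix.sub_apply, Matrix.smul_apply, adjMatrix_mul_self_apply,
    adjMatrix_apply, of_apply, smul_eq_mul, mul_one]

theorem isSymm_commonNeighborExcess [DecidableEq V] (lam mu : ℝ) :
    (G.commonNeighborExcess lam mu).IsSymm :=
  IsSymm.ext fun i j => by simp only [commonNeighborExcess_apply, inter_comm, adj_comm]

variable {G}

theorem commonNeighborExcess_apply_nonneg [DecidableEq V] {lam mu : ℝ}
    (hlam : ∀ i j, G.Adj i j → lam ≤ #(G.neighborFinset i ∩ G.neighborFinset j))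
    (hmu : ∀ i j, i ≠ j → ¬ G.Adj i j → mu ≤ #(G.neighborFinset i ∩ G.neighborFinset j))
    {i j : V} (hij : i ≠ j) : 0 ≤ G.commonNeighborExcess lam mu i j := by
  rw [commonNeighborExcess_apply]
  by_cases hadj : G.Adj i j
  · simp only [if_pos hadj]
    linarith [hlam i j hadj]
  · simp only [if_neg hadj]
    linarith [hmu i j hij hadj]

theorem commonNeighborExcess_mulVec_one (lam mu : ℝ) (i : V) :
    (G.commonNeighborExcess lam mu *ᵥ 1) i = ∑ k ∈ G.neighborFinset i, (G.degree k : ℝ)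
      - (lam - mu) * G.degree i - mu * Fintype.card V := by
  simp only [commonNeighborExcess, sub_mulVec, smul_mulVec, ← mulVec_mulVec, Pi.sub_apply,
    Pi.smul_apply, adjMatrix_mulVec_apply, Pi.one_apply, sum_const, card_neighborFinset_eq_degree,
    smul_eq_mul]
  simp [mulVec, dotProduct]

theorem adjMatrix_mulVec_of_lapMatrix_mulVec_eq_smul [DecidableEq V] {ℓ : ℝ} {x : V → ℝ}
    (h : G.lapMatrix ℝ *ᵥ x = ℓ • x) :
    G.adjMatrix ℝ *ᵥ x = fun i => (G.degree i - ℓ) * x i := by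
  ext i
  have hi := congrFun h i
  rw [lapMatrix_mulVec_apply] at hi
  simp only [adjMatrix_mulVec_apply, Pi.smul_apply, smul_eq_mul] at hi ⊢
  linarith

theorem dotProduct_commonNeighborExcess_mulVec (lam mu : ℝ) {ℓ : ℝ} {x : V → ℝ}
    (hsum : ∑ i, x i = 0) (hx : G.adjMatrix ℝ *ᵥ x = fun i => (G.degree i - ℓ) * x i) :
    x ⬝ᵥ G.commonNeighborExcess lam mu *ᵥ x
      = ∑ i, ((G.degree i - ℓ) ^ 2 - (lam - mu) * (G.degree i - ℓ)) * x i ^ 2 := by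
  have hJ : (of fun _ _ => (1 : ℝ) : Matrix V V ℝ) *ᵥ x = 0 := by
    ext
    simp [mulVec, dotProduct, hsum]
  have hAA : x ⬝ᵥ G.adjMatrix ℝ *ᵥ (G.adjMatrix ℝ *ᵥ x)
      = (G.adjMatrix ℝ *ᵥ x) ⬝ᵥ (G.adjMatrix ℝ *ᵥ x) := by
    rw [dotProduct_mulVec, ← mulVec_transpose, transpose_adjMatrix]
  rw [commonNeighborExcess, sub_mulVec, sub_mulVec, smul_mulVec, smul_mulVec, ← mulVec_mulVec,
    dotProduct_sub, dotProduct_sub, dotProduct_smul, dotProduct_smul, hJ, hAA, hx]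
  simp only [dotProduct, smul_eq_mul, mul_sum, ← sum_sub_distrib, Pi.zero_apply, mul_zero,
    sum_const_zero, sub_zero]
  exact sum_congr rfl fun i _ => by ring

theorem exists_quadratic_nonpos_of_lapMatrix_mulVec_eq_smul [DecidableEq V] {lam mu : ℝ}
    (hlam : ∀ i j, G.Adj i j → lam ≤ #(G.neighborFinset i ∩ G.neighborFinset j))
    (hmu : ∀ i j, i ≠ j → ¬ G.Adj i j → mu ≤ #(G.neighborFinset i ∩ G.neighborFinset j))
    {ℓ : ℝ} {x : V → ℝ} (hx : x ≠ 0) (hsum : ∑ i, x i = 0) (h : G.lapMatrix ℝ *ᵥ x = ℓ • x) :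
    ∃ i, ℓ ^ 2 - (2 * G.degree i - lam + mu) * ℓ
      + (G.degree i ^ 2 - ∑ k ∈ G.neighborFinset i, (G.degree k : ℝ) + mu * Fintype.card V)
        ≤ 0 := by
  set C := G.commonNeighborExcess lam mu
  have hform : 0 ≤ ∑ i, ∑ j, C i j * (x i - x j) ^ 2 :=
    sum_nonneg fun i _ => sum_nonneg fun j _ => by
      rcases eq_or_ne i j with rfl | hij
      · simp
      · exact mul_nonneg (commonNeighborExcess_apply_nonneg hlam hmu hij) (sq_nonneg _)
  rw [(G.isSymm_commonNeighborExcess lam mu).sum_mul_sub_sq,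
    dotProduct_commonNeighborExcess_mulVec lam mu hsum
      (adjMatrix_mulVec_of_lapMatrix_mulVec_eq_smul h)] at hform
  simp only [commonNeighborExcess_mulVec_one, ← sum_sub_distrib] at hform
  refine exists_nonpos_of_sum_mul_sq_nonpos hx ?_
  rw [← neg_nonneg, ← sum_neg_distrib, ← mul_nonneg_iff_of_pos_left two_pos]
  exact hform.trans_eq (congrArg (2 * ·) (sum_congr rfl fun i _ => by ring))

theorem exists_radicand_nonneg_and_mem_Icc_of_lapMatrix_mulVec_eq_smul [DecidableEq V]
    {lam mu : ℝ}
    (hlam : ∀ i j, G.Adj i j → lam ≤ #(G.neighborFinset i ∩ G.neighborFinset j))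
    (hmu : ∀ i j, i ≠ j → ¬ G.Adj i j → mu ≤ #(G.neighborFinset i ∩ G.neighborFinset j))
    {ℓ : ℝ} {x : V → ℝ} (hx : x ≠ 0) (hsum : ∑ i, x i = 0) (h : G.lapMatrix ℝ *ᵥ x = ℓ • x) :
    ∃ i, 0 ≤ 4 * ∑ k ∈ G.neighborFinset i, (G.degree k : ℝ) - 4 * (lam - mu) * G.degree i
        + (lam - mu) ^ 2 - 4 * mu * Fintype.card V ∧
      ℓ ∈ Set.Icc
        ((2 * G.degree i - lam + mu - √(4 * ∑ k ∈ G.neighborFinset i, (G.degree k : ℝ)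
          - 4 * (lam - mu) * G.degree i + (lam - mu) ^ 2 - 4 * mu * Fintype.card V)) / 2)
        ((2 * G.degree i - lam + mu + √(4 * ∑ k ∈ G.neighborFinset i, (G.degree k : ℝ)
          - 4 * (lam - mu) * G.degree i + (lam - mu) ^ 2 - 4 * mu * Fintype.card V)) / 2) := by
  obtain ⟨i, hi⟩ := exists_quadratic_nonpos_of_lapMatrix_mulVec_eq_smul hlam hmu hx hsum h
  have hdisc : (2 * (G.degree i : ℝ) - lam + mu) ^ 2
      - 4 * (G.degree i ^ 2 - ∑ k ∈ G.neighborFinset i, (G.degree k : ℝ) + mu * Fintype.card V)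
      = 4 * ∑ k ∈ G.neighborFinset i, (G.degree k : ℝ) - 4 * (lam - mu) * G.degree i
        + (lam - mu) ^ 2 - 4 * mu * Fintype.card V := by ring
  exact ⟨i, hdisc ▸ discrim_nonneg_and_mem_Icc_of_sq_sub_mul_add_nonpos hi⟩

end SimpleGraph

theorem laplacian_spread_upper_bound_general (n : ℕ) (G : SimpleGraph (Fin n))
    [DecidableRel G.Adj]
    (lam mu : ℝ)
    (hlam : ∀ i j : Fin n, G.Adj i j →
      lam ≤ ((G.neighborFinset i ∩ G.neighborFinset j).card : ℝ))
    (hmu : ∀ i j : Fin n, i ≠ j → ¬ G.Adj i j →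
      mu ≤ ((G.neighborFinset i ∩ G.neighborFinset j).card : ℝ))
    (ℓ₁ ℓₙ₁ : ℝ)
    (hℓ₁ : IsGreatest {l : ℝ | ∃ X : Fin n → ℝ, X ≠ 0 ∧
      (G.lapMatrix ℝ).mulVec X = l • X} ℓ₁)
    (hℓₙ₁ : IsLeast {l : ℝ | ∃ X : Fin n → ℝ, X ≠ 0 ∧ (∑ i, X i) = 0 ∧
      (G.lapMatrix ℝ).mulVec X = l • X} ℓₙ₁) :
    ∃ i j : Fin n,
      0 ≤ 4 * (∑ k ∈ G.neighborFinset i, (G.degree k : ℝ))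
          - 4 * (lam - mu) * (G.degree i : ℝ) + (lam - mu) ^ 2 - 4 * mu * (n : ℝ) ∧
      0 ≤ 4 * (∑ k ∈ G.neighborFinset j, (G.degree k : ℝ))
          - 4 * (lam - mu) * (G.degree j : ℝ) + (lam - mu) ^ 2 - 4 * mu * (n : ℝ) ∧
      ℓ₁ - ℓₙ₁ ≤
        (2 * (G.degree i : ℝ) - lam + mu
          + Real.sqrt (4 * (∑ k ∈ G.neighborFinset i, (G.degree k : ℝ))
            - 4 * (lam - mu) * (G.degree i : ℝ) + (lam - mu) ^ 2 - 4 * mu * (n : ℝ))) / 2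
        - (2 * (G.degree j : ℝ) - lam + mu
          - Real.sqrt (4 * (∑ k ∈ G.neighborFinset j, (G.degree k : ℝ))
            - 4 * (lam - mu) * (G.degree j : ℝ) + (lam - mu) ^ 2 - 4 * mu * (n : ℝ))) / 2 := by
  obtain ⟨X₂, hX₂, hsum₂, heig₂⟩ := hℓₙ₁.1
  obtain ⟨X₁, hX₁, hsum₁, heig₁⟩ :
      ∃ X : Fin n → ℝ, X ≠ 0 ∧ ∑ i, X i = 0 ∧ G.lapMatrix ℝ *ᵥ X = ℓ₁ • X := by
    obtain ⟨X, hX, heig⟩ := hℓ₁.1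
    rcases G.eq_zero_or_sum_eq_zero_of_lapMatrix_mulVec_eq_smul heig with hℓ₁0 | hsum
    · have hℓ : ℓₙ₁ = ℓ₁ := le_antisymm (hℓ₁.2 ⟨X₂, hX₂, heig₂⟩)
        (hℓ₁0 ▸ (G.posSemidef_lapMatrix ℝ).nonneg_of_mulVec_eq_smul hX₂ heig₂)
      exact ⟨X₂, hX₂, hsum₂, hℓ ▸ heig₂⟩
    · exact ⟨X, hX, hsum, heig⟩
  obtain ⟨i, hri, -, hi⟩ :=
    G.exists_radicand_nonneg_and_mem_Icc_of_lapMatrix_mulVec_eq_smul hlam hmu hX₁ hsum₁ heig₁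
  obtain ⟨j, hrj, hj, -⟩ :=
    G.exists_radicand_nonneg_and_mem_Icc_of_lapMatrix_mulVec_eq_smul hlam hmu hX₂ hsum₂ heig₂
  rw [Fintype.card_fin] at hri hi hrj hj
  exact ⟨i, j, hri, hrj, by linarith⟩

/-- **Corollary (upper bound on the Laplacian spread).** For a simple connected
non-complete graph `G` and reals `λ ≤ λ(G)`, `μ ≤ μ(G)`, the Laplacian spread
`𝒮_L(G) = ℓ₁(G) − ℓ_{n−1}(G)` satisfies
`𝒮_L(G) ≤ max_i (2d_i − λ + μ + √(rad_i))/2 − min_j (2d_j − λ + μ − √(rad_j))/2`,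
max and min over vertices with nonnegative radicand
`rad_i = 4 d_i m_i − 4(λ−μ)d_i + (λ−μ)² − 4μn`. -/
theorem laplacian_spread_upper_bound (n : ℕ) (G : SimpleGraph (Fin n))
    [DecidableRel G.Adj]
    (hconn : G.Connected)
    (hnoncomplete : ∃ i j : Fin n, i ≠ j ∧ ¬ G.Adj i j)
    (lam mu : ℝ)
    (hlam : ∀ i j : Fin n, G.Adj i j →
      lam ≤ ((G.neighborFinset i ∩ G.neighborFinset j).card : ℝ))
    (hmu : ∀ i j : Fin n, i ≠ j → ¬ G.Adj i j →
      mu ≤ ((G.neighborFinset i ∩ G.neighborFinset j).card : ℝ))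
    (ℓ₁ ℓₙ₁ : ℝ)
    (hℓ₁ : IsGreatest {l : ℝ | ∃ X : Fin n → ℝ, X ≠ 0 ∧
      (G.lapMatrix ℝ).mulVec X = l • X} ℓ₁)
    (hℓₙ₁ : IsLeast {l : ℝ | ∃ X : Fin n → ℝ, X ≠ 0 ∧ (∑ i, X i) = 0 ∧
      (G.lapMatrix ℝ).mulVec X = l • X} ℓₙ₁) :
    ∃ i j : Fin n,
      0 ≤ 4 * (∑ k ∈ G.neighborFinset i, (G.degree k : ℝ))
          - 4 * (lam - mu) * (G.degree i : ℝ) + (lam - mu) ^ 2 - 4 * mu * (n : ℝ) ∧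
      0 ≤ 4 * (∑ k ∈ G.neighborFinset j, (G.degree k : ℝ))
          - 4 * (lam - mu) * (G.degree j : ℝ) + (lam - mu) ^ 2 - 4 * mu * (n : ℝ) ∧
      ℓ₁ - ℓₙ₁ ≤
        (2 * (G.degree i : ℝ) - lam + mu
          + Real.sqrt (4 * (∑ k ∈ G.neighborFinset i, (G.degree k : ℝ))
            - 4 * (lam - mu) * (G.degree i : ℝ) + (lam - mu) ^ 2 - 4 * mu * (n : ℝ))) / 2
        - (2 * (G.degree j : ℝ) - lam + mu
          - Real.sqrt (4 * (∑ k ∈ G.neighborFinset j, (G.degree k : ℝ))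
            - 4 * (lam - mu) * (G.degree j : ℝ) + (lam - mu) ^ 2 - 4 * mu * (n : ℝ))) / 2 :=
  laplacian_spread_upper_bound_general n G lam mu hlam hmu ℓ₁ ℓₙ₁ hℓ₁ hℓₙ₁
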